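/- For φ ∈ [π/2, π), define λ(φ) = (1 + cos²φ + 2 cos φ)/8 and λ'(φ) = (−sin 2φ − 2 sin φ)/8, and set ṡ(φ) = 2λ(φ)·cos φ − λ'(φ)·sin φ and ν̇(φ) = 2λ(φ)·sin φ + λ'(φ)·cos φ. Then for every φ ∈ [π/2, π) one has 0 < ṡ(φ) ≤ ν̇(φ), and the identity (ṡ(φ) + ν̇(φ)²/ṡ(φ))² = (1 + cos²φ + 2 cos φ)/4 holds. -/

import Mathlib

open Real

/-- On `φ ∈ [π/2, π)`, with `λ(φ) = (1 + cos²φ + 2cos φ)/8`,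
`λ'(φ) = (−sin 2φ − 2sin φ)/8`, `ṡ = 2λcos φ − λ'sin φ`,
`ν̇ = 2λsin φ + λ'cos φ`, one has `0 < ṡ ≤ ν̇` and
`(ṡ + ν̇²/ṡ)² = (1 + cos²φ + 2cos φ)/4`. -/
theorem stmt_11 (φ : ℝ) (hφ : φ ∈ Set.Ico (π/2) π) :
    0 < 2 * ((1 + (Real.cos φ)^2 + 2 * Real.cos φ) / 8) * Real.cos φ
        - ((-Real.sin (2*φ) - 2 * Real.sin φ) / 8) * Real.sin φ ∧
    2 * ((1 + (Real.cos φ)^2 + 2 * Real.cos φ) / 8) * Real.cos φ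
        - ((-Real.sin (2*φ) - 2 * Real.sin φ) / 8) * Real.sin φ
      ≤ 2 * ((1 + (Real.cos φ)^2 + 2 * Real.cos φ) / 8) * Real.sin φ
        + ((-Real.sin (2*φ) - 2 * Real.sin φ) / 8) * Real.cos φ ∧
    ((2 * ((1 + (Real.cos φ)^2 + 2 * Real.cos φ) / 8) * Real.cos φ
        - ((-Real.sin (2*φ) - 2 * Real.sin φ) / 8) * Real.sin φ)
      + (2 * ((1 + (Real.cos φ)^2 + 2 * Real.cos φ) / 8) * Real.sin φ
          + ((-Real.sin (2*φ) - 2 * Real.sin φ) / 8) * Real.cos φ)^2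
        / (2 * ((1 + (Real.cos φ)^2 + 2 * Real.cos φ) / 8) * Real.cos φ
          - ((-Real.sin (2*φ) - 2 * Real.sin φ) / 8) * Real.sin φ))^2
      = (1 + (Real.cos φ)^2 + 2 * Real.cos φ) / 4 := by
  obtain ⟨h1, h2⟩ := hφ
  have hpi := Real.pi_pos
  have hs : 0 ≤ Real.sin φ := Real.sin_nonneg_of_nonneg_of_le_pi (by linarith) (le_of_lt h2)
  have hc : Real.cos φ ≤ 0 := Real.cos_nonpos_of_pi_div_two_le_of_le h1 (by linarith)
  have hhalf : 0 < Real.cos (φ/2) := Real.cos_pos_of_mem_Ioo ⟨by linarith, by linarith⟩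
  have hsq : Real.cos (φ/2)^2 = 1/2 + Real.cos (2*(φ/2))/2 := Real.cos_sq _
  rw [show 2*(φ/2) = φ by ring] at hsq
  have hc1 : 0 < 1 + Real.cos φ := by nlinarith
  have hpyth := Real.sin_sq_add_cos_sq φ
  have hs2 : Real.sin φ ^ 2 = 1 - Real.cos φ ^ 2 := by linarith
  have h2s : Real.sin (2*φ) = 2 * Real.sin φ * Real.cos φ := Real.sin_two_mul φ
  have hsdot : 2 * ((1 + (Real.cos φ)^2 + 2 * Real.cos φ) / 8) * Real.cos φ
        - ((-Real.sin (2*φ) - 2 * Real.sin φ) / 8) * Real.sin φ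
      = (1 + Real.cos φ)^2 / 4 := by
    rw [h2s]; nlinarith [hs2]
  have hndot : 2 * ((1 + (Real.cos φ)^2 + 2 * Real.cos φ) / 8) * Real.sin φ
        + ((-Real.sin (2*φ) - 2 * Real.sin φ) / 8) * Real.cos φ
      = Real.sin φ * (1 + Real.cos φ) / 4 := by
    rw [h2s]; ring
  have hsle : 1 + Real.cos φ ≤ Real.sin φ := by nlinarith
  refine ⟨?_, ?_, ?_⟩
  · rw [hsdot]; positivity
  · rw [hsdot, hndot]; nlinarith
  · rw [hsdot, hndot]
    have hne : (1 + Real.cos φ) ≠ 0 := by positivity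
    have key : (Real.sin φ * (1 + Real.cos φ) / 4)^2 / ((1 + Real.cos φ)^2/4) = Real.sin φ^2 / 4 := by
      field_simp
    rw [key]
    linear_combination ((Real.sin φ^2 + 1 - Real.cos φ^2)/16 + (1+Real.cos φ)^2/8) * hs2
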